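/- Let A be a commutative unital algebra over a field k of characteristic 0, let Ω be a differential graded algebra receiving a map d : A → Ω^1 (Kähler differentials or de Rham forms), and let c be a linear functional on Ω^m. Define the Hochschild m-cochain ι(c)(a_0,…,a_m) = (1/m!) c(a_0 da_1 ⋯ da_m). Then b(ι(c)) = 0, i.e. ι(c) is a Hochschild cocycle, using only the Leibniz rule d(ab) = a db + b da and commutativity of A. -/

import Mathlib

/-!
The only property of the product `(ω₁, …, ωₘ) ↦ ω₁ ⋯ ωₘ` that matters is that it is
`A`-multilinear, which holds because `A` acts centrally on `Ω`. Write `b = (a₁, …, a_{m+1})` and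
`T_p = a₀ b_p • (d b₁ ⋯ (d b_p omitted) ⋯ d b_{m+1})`. The first face of `b(ι c)` is `T₁`, and
because `A` is commutative the cyclic face is `T_{m+1}`. The Leibniz rule splits the inner face
that multiplies `b_j b_{j+1}` into `T_j + T_{j+1}`, so the alternating sum telescopes to zero.
-/

/-- The Hochschild coboundary on cochains:
`(bφ)(a₀,…,a_{m+1}) = ∑_{i=0}^{m} (-1)^i φ(a₀,…,a_i a_{i+1},…,a_{m+1})
 + (-1)^{m+1} φ(a_{m+1} a₀, a₁, …, a_m)`. -/
def hb {A M : Type*} [Ring A] [AddCommGroup M] {n : ℕ}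
    (φ : (Fin (n + 1) → A) → M) : (Fin (n + 2) → A) → M := fun a =>
  (∑ i : Fin (n + 1), ((-1 : ℤ) ^ (i : ℕ)) •
      φ (fun j : Fin (n + 1) =>
        if (j : ℕ) < (i : ℕ) then a j.castSucc
        else if (j : ℕ) = (i : ℕ) then a j.castSucc * a j.succ
        else a j.succ)) +
    ((-1 : ℤ) ^ (n + 1)) •
      φ (fun j : Fin (n + 1) =>
        if (j : ℕ) = 0 then a (Fin.last (n + 1)) * a 0 else a j.castSucc)

theorem hb_comp {A M M' : Type*} [Ring A] [AddCommGroup M] [AddCommGroup M'] {n : ℕ}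
    (f : M →+ M') (φ : (Fin (n + 1) → A) → M) : hb (f ∘ φ) = f ∘ hb φ := by
  funext a
  simp only [hb, Function.comp_apply, map_add, map_sum, map_zsmul]

theorem hb_apply {A M : Type*} [Ring A] [AddCommGroup M] {n : ℕ} (φ : (Fin (n + 1) → A) → M)
    (a : Fin (n + 2) → A) :
    hb φ a = ∑ i : Fin (n + 1), (-1 : ℤ) ^ (i : ℕ) • φ (Fin.contractNth i.castSucc (· * ·) a) +
      (-1 : ℤ) ^ (n + 1) • φ (Fin.cons (a (Fin.last (n + 1)) * a 0) (Fin.init (Fin.tail a))) := by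
  rw [hb]
  congr 3
  ext j
  cases j using Fin.cases <;> rfl

theorem sum_alternating_adjacent_eq_zero {M : Type*} [AddCommGroup M] {m : ℕ}
    (T : Fin (m + 1) → M) :
    T 0 + ∑ j : Fin m, (-1 : ℤ) ^ ((j : ℕ) + 1) • (T j.castSucc + T j.succ)
      + (-1 : ℤ) ^ (m + 1) • T (Fin.last m) = 0 := by
  have hsucc := Fin.sum_univ_succ fun i : Fin (m + 1) => (-1 : ℤ) ^ (i : ℕ) • T i
  have hcast := Fin.sum_univ_castSucc fun i : Fin (m + 1) => (-1 : ℤ) ^ (i : ℕ) • T i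
  simp only [Fin.val_zero, pow_zero, one_smul, Fin.val_succ, Fin.val_castSucc, Fin.val_last]
    at hsucc hcast
  simp only [smul_add, Finset.sum_add_distrib, pow_succ, mul_neg_one, neg_smul,
    Finset.sum_neg_distrib] at hsucc ⊢
  rw [hsucc, ← sub_eq_zero] at hcast
  rw [← hcast]
  abel

namespace Fin

variable {n : ℕ} {α : Type*}

theorem contractNth_castSucc_eq_update_removeNth (j : Fin n) (op : α → α → α)
    (f : Fin (n + 1) → α) :
    contractNth j.castSucc op f =
      Function.update (removeNth j.succ f) j (op (f j.castSucc) (f j.succ)) := by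
  ext k
  rcases lt_trichotomy k j with h | rfl | h
  · rw [contractNth_apply_of_lt _ _ _ _ h, Function.update_of_ne h.ne, removeNth_apply,
      succAbove_of_castSucc_lt _ _ (castSucc_lt_succ_iff.mpr h.le)]
  · rw [contractNth_apply_of_eq _ _ _ _ rfl, Function.update_self]
  · rw [contractNth_apply_of_gt _ _ _ _ h, Function.update_of_ne h.ne', removeNth_apply,
      succAbove_of_le_castSucc _ _ (succ_le_castSucc_iff.mpr h)]

theorem update_removeNth_succ (j : Fin n) (f : Fin (n + 1) → α) :
    Function.update (removeNth j.succ f) j (f j.succ) = removeNth j.castSucc f := by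
  ext k
  rcases lt_trichotomy k j with h | rfl | h
  · rw [Function.update_of_ne h.ne, removeNth_apply, removeNth_apply,
      succAbove_of_castSucc_lt _ _ (castSucc_lt_succ_iff.mpr h.le),
      succAbove_of_castSucc_lt _ _ (castSucc_lt_castSucc_iff.mpr h)]
  · rw [Function.update_self, removeNth_apply, succAbove_castSucc_self]
  · rw [Function.update_of_ne h.ne', removeNth_apply, removeNth_apply,
      succAbove_of_le_castSucc _ _ (succ_le_castSucc_iff.mpr h),
      succAbove_of_le_castSucc _ _ (castSucc_le_castSucc_iff.mpr h.le)]

theorem tail_contractNth_succ (j : Fin (n + 1)) (op : α → α → α) (f : Fin (n + 2) → α) :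
    tail (contractNth j.succ op f) = contractNth j op (tail f) := by
  ext k
  simp only [tail, contractNth, val_succ, add_lt_add_iff_right, add_left_inj, succ_castSucc]

end Fin

section Leibniz

variable {A Ω N : Type*} [CommRing A] [AddCommGroup Ω] [Module A Ω] [AddCommGroup N] [Module A N]
  {d : A → Ω}

theorem MultilinearMap.map_comp_contractNth_of_leibniz {n : ℕ}
    (ψ : MultilinearMap A (fun _ : Fin n => Ω) N) (hd : ∀ x y, d (x * y) = x • d y + y • d x)
    (j : Fin n) (b : Fin (n + 1) → A) :
    ψ (d ∘ Fin.contractNth j.castSucc (· * ·) b) =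
      b j.castSucc • ψ (d ∘ Fin.removeNth j.castSucc b) +
        b j.succ • ψ (d ∘ Fin.removeNth j.succ b) := by
  have hself : Function.update (Fin.removeNth j.succ b) j (b j.castSucc) =
      Fin.removeNth j.succ b :=
    Function.update_eq_self_iff.mpr (by rw [Fin.removeNth_apply, Fin.succAbove_succ_self])
  rw [Fin.contractNth_castSucc_eq_update_removeNth, Function.comp_update, hd, ψ.map_update_add,
    ψ.map_update_smul, ψ.map_update_smul, ← Function.comp_update, ← Function.comp_update,
    Fin.update_removeNth_succ, hself]

/-- For `ψ = MultilinearMap.mkPiAlgebraFin A m Ω` this is the form `a₀ da₁ ⋯ daₘ`. -/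
def leibnizCochain {m : ℕ} (ψ : MultilinearMap A (fun _ : Fin m => Ω) N) (d : A → Ω)
    (a : Fin (m + 1) → A) : N :=
  a 0 • ψ (d ∘ Fin.tail a)

theorem hb_leibnizCochain {m : ℕ} (ψ : MultilinearMap A (fun _ : Fin m => Ω) N)
    (hd : ∀ x y, d (x * y) = x • d y + y • d x) : hb (leibnizCochain ψ d) = 0 := by
  funext a
  rw [hb_apply, Fin.sum_univ_succ]
  set b := Fin.tail a
  let T : Fin (m + 1) → N := fun p => (a 0 * b p) • ψ (d ∘ Fin.removeNth p b)
  have hfirst : leibnizCochain ψ d (Fin.contractNth (0 : Fin (m + 1)).castSucc (· * ·) a) =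
      T 0 := by
    have htail : Fin.tail (Fin.contractNth 0 (· * ·) a) = Fin.removeNth 0 b :=
      funext fun k => Fin.contractNth_apply_of_gt _ _ _ _ k.succ_pos
    rw [leibnizCochain, Fin.castSucc_zero, htail, Fin.contractNth_apply_of_eq _ _ _ _ rfl]
    rfl
  have hinner (j : Fin m) :
      leibnizCochain ψ d (Fin.contractNth j.succ.castSucc (· * ·) a) =
        T j.castSucc + T j.succ := by
    rw [leibnizCochain, ← Fin.succ_castSucc, Fin.tail_contractNth_succ,
      ψ.map_comp_contractNth_of_leibniz hd, Fin.contractNth_apply_of_lt _ _ _ _ (Nat.succ_pos _)]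
    simp only [T, smul_add, smul_smul]
    rfl
  have hcyclic : leibnizCochain ψ d (Fin.cons (a (Fin.last (m + 1)) * a 0) (Fin.init b)) =
      T (Fin.last m) := by
    rw [leibnizCochain, Fin.cons_zero, Fin.tail_cons, mul_comm]
    simp only [T, b, Fin.tail, Fin.succ_last, Fin.removeNth_last]
  simp only [hfirst, hinner, hcyclic, Pi.zero_apply, Fin.val_zero, Fin.val_succ, pow_zero,
    one_smul]
  exact sum_alternating_adjacent_eq_zero T

end Leibniz

theorem stmt11_general {k A Ω : Type*} [Field k]
    [CommRing A] [Ring Ω] [Algebra k Ω] [Algebra A Ω]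
    (d : A → Ω)
    (hLeib : ∀ a b : A,
      d (a * b) = algebraMap A Ω a * d b + algebraMap A Ω b * d a)
    (c : Ω →ₗ[k] k) (m : ℕ) :
    hb (fun a : Fin (m + 1) → A =>
        ((m.factorial : k))⁻¹ *
          c (algebraMap A Ω (a 0) *
            (List.ofFn fun i : Fin m => d (a i.succ)).prod))
      = fun _ => 0 := by
  have hd : ∀ x y, d (x * y) = x • d y + y • d x := by simpa only [Algebra.smul_def] using hLeib
  have hι : (fun a : Fin (m + 1) → A =>
        ((m.factorial : k))⁻¹ * c (algebraMap A Ω (a 0) *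
          (List.ofFn fun i : Fin m => d (a i.succ)).prod)) =
      (AddMonoidHom.mulLeft ((m.factorial : k))⁻¹).comp c.toAddMonoidHom ∘
        leibnizCochain (MultilinearMap.mkPiAlgebraFin A m Ω) d := by
    funext a
    simp only [Function.comp_apply, leibnizCochain, MultilinearMap.mkPiAlgebraFin_apply,
      Algebra.smul_def]
    rfl
  rw [hι, hb_comp, hb_leibnizCochain _ hd]
  exact funext fun _ => map_zero _

/-- for a commutative unital algebra `A`, a differential-forms
type algebra `Ω` receiving `A` centrally, a Leibniz-rule map `d : A → Ω`, and
a linear functional `c` on `Ω`, the cochain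
`ι(c)(a₀,…,a_m) = (1/m!) c(a₀ · d a₁ ⋯ d a_m)` is a Hochschild cocycle:
`b(ι(c)) = 0`. -/
theorem stmt11 {k A Ω : Type*} [Field k] [CharZero k]
    [CommRing A] [Algebra k A] [Ring Ω] [Algebra k Ω] [Algebra A Ω]
    [IsScalarTower k A Ω]
    (d : A → Ω)
    (hLeib : ∀ a b : A,
      d (a * b) = algebraMap A Ω a * d b + algebraMap A Ω b * d a)
    (c : Ω →ₗ[k] k) (m : ℕ) :
    hb (fun a : Fin (m + 1) → A =>
        ((m.factorial : k))⁻¹ *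
          c (algebraMap A Ω (a 0) *
            (List.ofFn fun i : Fin m => d (a i.succ)).prod))
      = fun _ => 0 :=
  stmt11_general d hLeib c m
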